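/- Let N be a positive integer, let Λ ⊂ Nℤ, and let 0 ≤ b < a < 1 be real numbers. If E(Λ) is a Riesz basis for L²([a/N, (1+b)/N)), then E(Λ) is a Riesz basis for L²([0, b/N) ∪ [a/N, 1/N)). -/

import Mathlib

/-!
Write `p = 1/N`. Reduction modulo `p` into `[a/N, a/N + p)` maps `[0, b/N) ∪ [a/N, 1/N)` onto
`[a/N, (1 + b)/N)`: it translates `[0, b/N)` by `p` and fixes `[a/N, 1/N)`. It therefore preserves
Lebesgue measure, it is inverted by reduction modulo `p` into `[0, p)`, and it fixes every
exponential with frequency in `Nℤ`. Changing variables along it carries both Riesz inequalities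
and the completeness of `E(Λ)` from one set to the other.
-/

open MeasureTheory Real Set
open scoped Classical

/-- The exponential function `e^{2πiλx}`. -/
noncomputable def expf (l : ℝ) : ℝ → ℂ :=
  fun x => Complex.exp (2 * (Real.pi : ℂ) * Complex.I * (l : ℂ) * (x : ℂ))

/-- The system `E(Λ) = {e^{2πiλx} : λ ∈ Λ}` is a Riesz sequence in `L²(S)`:
there are `0 < A ≤ B < ∞` such that
`A‖c‖² ≤ ‖∑ c_λ e^{2πiλ·}‖²_{L²(S)} ≤ B‖c‖²` for all (finitely supported) coefficients. -/
def IsRieszSeqExp (Λ S : Set ℝ) : Prop :=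
  ∃ A B : ℝ, 0 < A ∧ A ≤ B ∧
    ∀ c : ↥Λ →₀ ℂ,
      (A * ∑ l ∈ c.support, ‖c l‖ ^ 2 ≤
          ∫ x in S, ‖∑ l ∈ c.support, c l * expf (l : ℝ) x‖ ^ 2) ∧
      (∫ x in S, ‖∑ l ∈ c.support, c l * expf (l : ℝ) x‖ ^ 2 ≤
          B * ∑ l ∈ c.support, ‖c l‖ ^ 2)

/-- The system `E(Λ)` is a frame for `L²(S)`: there are `0 < A ≤ B < ∞` such that
`A‖f‖² ≤ ∑_{λ∈Λ} |⟨f, e^{2πiλ·}⟩|² ≤ B‖f‖²` for all `f ∈ L²(S)`. -/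
def IsFrameExp (Λ S : Set ℝ) : Prop :=
  ∃ A B : ℝ, 0 < A ∧ A ≤ B ∧
    ∀ f : ℝ → ℂ, MemLp f 2 (volume.restrict S) →
      (A * ∫ x in S, ‖f x‖ ^ 2 ≤
          ∑' l : ↥Λ, ‖∫ x in S, f x * (starRingEnd ℂ) (expf (l : ℝ) x)‖ ^ 2) ∧
      (∑' l : ↥Λ, ‖∫ x in S, f x * (starRingEnd ℂ) (expf (l : ℝ) x)‖ ^ 2 ≤
          B * ∫ x in S, ‖f x‖ ^ 2)

/-- The system `E(Λ)` is complete in `L²(S)`. -/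
def IsCompleteExp (Λ S : Set ℝ) : Prop :=
  ∀ f : ℝ → ℂ, MemLp f 2 (volume.restrict S) →
    (∀ l ∈ Λ, (∫ x in S, f x * (starRingEnd ℂ) (expf l x)) = 0) →
    ∀ᵐ x ∂(volume.restrict S), f x = 0

/-- The system `E(Λ)` is a Riesz basis for `L²(S)`: a complete Riesz sequence. -/
def IsRieszBasisExp (Λ S : Set ℝ) : Prop :=
  IsRieszSeqExp Λ S ∧ IsCompleteExp Λ S

/-- `A_{≥n}(N,S) = {t ∈ [0,1/N) : t + k/N ∈ S for at least n values of k ∈ {0,…,N-1}}`. -/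
def Ageq (N : ℕ) (S : Set ℝ) (n : ℕ) : Set ℝ :=
  {t : ℝ | t ∈ Set.Ico (0 : ℝ) (1 / (N : ℝ)) ∧
    n ≤ ((Finset.range N).filter (fun k => t + (k : ℝ) / (N : ℝ) ∈ S)).card}

@[fun_prop]
lemma continuous_expf (l : ℝ) : Continuous (expf l) := by
  unfold expf
  fun_prop

lemma periodic_expf_mul_intCast {N : ℝ} (hN : N ≠ 0) (m : ℤ) :
    Function.Periodic (expf (N * m)) (1 / N) := by
  intro x
  have hN' : (N : ℂ) ≠ 0 := by exact_mod_cast hN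
  rw [expf, expf, Complex.ofReal_add, mul_add, Complex.exp_add,
    show 2 * (π : ℂ) * Complex.I * ((N * m : ℝ) : ℂ) * ((1 / N : ℝ) : ℂ) =
        m * (2 * π * Complex.I) by push_cast; field_simp,
    Complex.exp_int_mul_two_pi_mul_I, mul_one]

lemma Function.Periodic.apply_toIcoMod {α β : Type*} [AddCommGroup α] [LinearOrder α]
    [IsOrderedAddMonoid α] [Archimedean α] {f : α → β} {p : α} (hf : Function.Periodic f p)
    (hp : 0 < p) (a x : α) : f (toIcoMod hp a x) = f x := by
  rw [← self_sub_toIcoDiv_zsmul, hf.sub_zsmul_eq]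

lemma measurable_toIcoMod {p : ℝ} (hp : 0 < p) (a : ℝ) : Measurable (toIcoMod hp a) := by
  simp_rw [funext (toIcoMod_eq_add_fract_mul hp a)]
  fun_prop

section Translation

variable {G : Type*} [MeasurableSpace G] [AddGroup G] [MeasurableAdd G]
  {μ : Measure G} [μ.IsAddRightInvariant]

lemma map_restrict_of_eqOn_add_const {f : G → G} {s : Set G} (hs : MeasurableSet s) {c : G}
    (hf : EqOn f (· + c) s) : (μ.restrict s).map f = μ.restrict ((· + c) '' s) := by
  have he : MeasurableEmbedding (· + c : G → G) := (MeasurableEquiv.addRight c).measurableEmbedding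
  conv_rhs => rw [← map_add_right_eq_self μ c, he.restrict_map,
    preimage_image_eq _ (add_left_injective c)]
  exact Measure.map_congr (ae_restrict_of_forall_mem hs hf)

lemma measurePreserving_restrict_union_of_eqOn_add_const {f : G → G} (hf : Measurable f)
    {s₁ s₂ : Set G} (hs₁ : MeasurableSet s₁) (hs₂ : MeasurableSet s₂) (hs : Disjoint s₁ s₂)
    {c₁ c₂ : G} (hf₁ : EqOn f (· + c₁) s₁) (hf₂ : EqOn f (· + c₂) s₂)
    (ht : Disjoint ((· + c₁) '' s₁) ((· + c₂) '' s₂)) :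
    MeasurePreserving f (μ.restrict (s₁ ∪ s₂)) (μ.restrict ((· + c₁) '' s₁ ∪ (· + c₂) '' s₂)) := by
  refine ⟨hf, ?_⟩
  have ht₂ : MeasurableSet ((· + c₂) '' s₂) :=
    (MeasurableEquiv.addRight c₂).measurableEmbedding.measurableSet_image.2 hs₂
  rw [Measure.restrict_union hs hs₂, Measure.restrict_union ht ht₂, Measure.map_add _ _ hf,
    map_restrict_of_eqOn_add_const hs₁ hf₁, map_restrict_of_eqOn_add_const hs₂ hf₂]

end Translation

section Transfer

variable {Λ S S' : Set ℝ} {φ ψ : ℝ → ℝ}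

lemma IsRieszSeqExp.of_measurePreserving
    (hφ : MeasurePreserving φ (volume.restrict S') (volume.restrict S))
    (hexp : ∀ l ∈ Λ, ∀ x, expf l (φ x) = expf l x) (h : IsRieszSeqExp Λ S) :
    IsRieszSeqExp Λ S' := by
  obtain ⟨A, B, hA, hAB, hbounds⟩ := h
  refine ⟨A, B, hA, hAB, fun c => ?_⟩
  have hcont : Continuous fun x => ‖∑ l ∈ c.support, c l * expf l x‖ ^ 2 := by
    fun_prop
  have hint : (∫ x in S, ‖∑ l ∈ c.support, c l * expf l x‖ ^ 2) =
      ∫ x in S', ‖∑ l ∈ c.support, c l * expf l x‖ ^ 2 := by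
    rw [← hφ.map_eq, integral_map hφ.aemeasurable hcont.aestronglyMeasurable]
    simp only [hexp _ (Subtype.prop _)]
  exact hint ▸ hbounds c

lemma IsCompleteExp.of_measurePreserving
    (hφ : MeasurePreserving φ (volume.restrict S') (volume.restrict S))
    (hψ : MeasurePreserving ψ (volume.restrict S) (volume.restrict S'))
    (hψφ : ∀ᵐ x ∂volume.restrict S', ψ (φ x) = x)
    (hexp : ∀ l ∈ Λ, ∀ x, expf l (φ x) = expf l x) (h : IsCompleteExp Λ S) :
    IsCompleteExp Λ S' := by
  intro f hf horth
  have hg : MemLp (f ∘ ψ) 2 (volume.restrict S) := hf.comp_measurePreserving hψ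
  have horth_g : ∀ l ∈ Λ, ∫ x in S, (f ∘ ψ) x * (starRingEnd ℂ) (expf l x) = 0 := by
    intro l hl
    have hmeas : AEStronglyMeasurable (fun x => (f ∘ ψ) x * (starRingEnd ℂ) (expf l x))
        ((volume.restrict S').map φ) := by
      rw [hφ.map_eq]
      exact hg.aestronglyMeasurable.mul (continuous_expf l).star.aestronglyMeasurable
    rw [← hφ.map_eq, integral_map hφ.aemeasurable hmeas, ← horth l hl]
    refine integral_congr_ae (hψφ.mono fun x hx => ?_)
    simp only [Function.comp_apply, hx, hexp l hl]
  filter_upwards [hφ.quasiMeasurePreserving.ae (h _ hg horth_g), hψφ] with x hx hψφx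
  rwa [Function.comp_apply, hψφx] at hx

lemma IsRieszBasisExp.of_measurePreserving
    (hφ : MeasurePreserving φ (volume.restrict S') (volume.restrict S))
    (hψ : MeasurePreserving ψ (volume.restrict S) (volume.restrict S'))
    (hψφ : ∀ᵐ x ∂volume.restrict S', ψ (φ x) = x)
    (hexp : ∀ l ∈ Λ, ∀ x, expf l (φ x) = expf l x) (h : IsRieszBasisExp Λ S) :
    IsRieszBasisExp Λ S' :=
  ⟨h.1.of_measurePreserving hφ hexp, h.2.of_measurePreserving hφ hψ hψφ hexp⟩

end Transfer

section Reduction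

variable {p α β : ℝ} (hp : 0 < p)
include hp

lemma measurePreserving_toIcoMod_restrict_Ico_union_Ico (hβ : 0 ≤ β) (hβα : β ≤ α) (hα : α ≤ p) :
    MeasurePreserving (toIcoMod hp α) (volume.restrict (Ico 0 β ∪ Ico α p))
      (volume.restrict (Ico α (p + β))) := by
  have hshift : EqOn (toIcoMod hp α) (· + p) (Ico 0 β) := fun x hx =>
    (toIcoMod_eq_iff hp).2 ⟨⟨by linarith [hx.1], by linarith [hx.2]⟩, -1, by simp⟩
  have hfix : EqOn (toIcoMod hp α) (· + 0) (Ico α p) := fun x hx =>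
    (toIcoMod_eq_iff hp).2 ⟨⟨by linarith [hx.1], by linarith [hx.2]⟩, 0, by simp⟩
  have hshift_image : (· + p) '' Ico 0 β = Ico p (p + β) := by
    rw [image_add_const_Ico, zero_add, add_comm]
  have hfix_image : (· + 0) '' Ico α p = Ico α p := by
    rw [image_add_const_Ico, add_zero, add_zero]
  have := measurePreserving_restrict_union_of_eqOn_add_const (μ := volume)
    (measurable_toIcoMod hp α) measurableSet_Ico measurableSet_Ico
    (Ico_disjoint_Ico_same.mono_right (Ico_subset_Ico_left hβα)) hshift hfix
    (by rw [hshift_image, hfix_image]; exact Ico_disjoint_Ico_same.symm)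
  rwa [hshift_image, hfix_image, union_comm (Ico p _), Ico_union_Ico_eq_Ico hα (by linarith)]
    at this

lemma measurePreserving_toIcoMod_zero_restrict_Ico (hβ : 0 ≤ β) (hβα : β ≤ α) (hα : α ≤ p) :
    MeasurePreserving (toIcoMod hp 0) (volume.restrict (Ico α (p + β)))
      (volume.restrict (Ico 0 β ∪ Ico α p)) := by
  have hshift : EqOn (toIcoMod hp 0) (· + -p) (Ico p (p + β)) := fun x hx =>
    (toIcoMod_eq_iff hp).2 ⟨⟨by linarith [hx.1], by linarith [hx.2]⟩, 1, by simp⟩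
  have hfix : EqOn (toIcoMod hp 0) (· + 0) (Ico α p) := fun x hx =>
    (toIcoMod_eq_iff hp).2 ⟨⟨by linarith [hx.1], by linarith [hx.2]⟩, 0, by simp⟩
  have hshift_image : (· + -p) '' Ico p (p + β) = Ico 0 β := by
    rw [image_add_const_Ico, add_neg_cancel, add_neg_cancel_comm]
  have hfix_image : (· + 0) '' Ico α p = Ico α p := by
    rw [image_add_const_Ico, add_zero, add_zero]
  have := measurePreserving_restrict_union_of_eqOn_add_const (μ := volume)
    (measurable_toIcoMod hp 0) measurableSet_Ico measurableSet_Ico Ico_disjoint_Ico_same.symm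
    hshift hfix (by
      rw [hshift_image, hfix_image]
      exact Ico_disjoint_Ico_same.mono_right (Ico_subset_Ico_left hβα))
  rwa [hshift_image, hfix_image, union_comm, Ico_union_Ico_eq_Ico hα (by linarith)] at this

lemma toIcoMod_zero_toIcoMod_of_mem_Ico_union_Ico (hβ : 0 ≤ β) (hβα : β ≤ α) (hα : α ≤ p) {x : ℝ}
    (hx : x ∈ Ico 0 β ∪ Ico α p) : toIcoMod hp 0 (toIcoMod hp α x) = x := by
  rw [toIcoMod_toIcoMod, toIcoMod_eq_self]
  rcases hx with hx | hx <;> constructor <;> linarith [hx.1, hx.2]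

end Reduction

theorem IsRieszBasisExp.Ico_union_Ico_of_Ico_add_period {Λ : Set ℝ} {p α β : ℝ} (hp : 0 < p)
    (hΛ : ∀ l ∈ Λ, Function.Periodic (expf l) p) (hβ : 0 ≤ β) (hβα : β ≤ α) (hα : α ≤ p)
    (h : IsRieszBasisExp Λ (Ico α (p + β))) : IsRieszBasisExp Λ (Ico 0 β ∪ Ico α p) :=
  h.of_measurePreserving (measurePreserving_toIcoMod_restrict_Ico_union_Ico hp hβ hβα hα)
    (measurePreserving_toIcoMod_zero_restrict_Ico hp hβ hβα hα)
    (ae_restrict_of_forall_mem (measurableSet_Ico.union measurableSet_Ico) fun _ hx =>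
      toIcoMod_zero_toIcoMod_of_mem_Ico_union_Ico hp hβ hβα hα hx)
    fun l hl => (hΛ l hl).apply_toIcoMod hp α

/-- Since exponentials with frequencies in `Nℤ` are `1/N`-periodic,
a Riesz basis `E(Λ)` for `L²([a/N,(1+b)/N))` with `Λ ⊂ Nℤ` is also a Riesz basis for
`L²([0,b/N) ∪ [a/N,1/N))`. -/
theorem stmt14 (N : ℕ) (hN : 0 < N) (Λ : Set ℝ)
    (hΛ : Λ ⊆ {x : ℝ | ∃ m : ℤ, x = (N : ℝ) * (m : ℝ)})
    (a b : ℝ) (hb : 0 ≤ b) (hba : b < a) (ha : a < 1)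
    (h : IsRieszBasisExp Λ (Set.Ico (a / N) ((1 + b) / N))) :
    IsRieszBasisExp Λ (Set.Ico (0 : ℝ) (b / N) ∪ Set.Ico (a / N) (1 / (N : ℝ))) := by
  have hN' : (0 : ℝ) < N := Nat.cast_pos.2 hN
  have hper : ∀ l ∈ Λ, Function.Periodic (expf l) (1 / N) := by
    intro l hl
    obtain ⟨m, rfl⟩ := hΛ hl
    exact periodic_expf_mul_intCast hN'.ne' m
  rw [add_div] at h
  exact h.Ico_union_Ico_of_Ico_add_period (by positivity) hper (by positivity)
    (div_le_div_of_nonneg_right hba.le hN'.le) (div_le_div_of_nonneg_right ha.le hN'.le)
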